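/- arXiv:1112.4009 — 4 statements merged into one kernel-verified Lean document; each statement's English description precedes it below -/
import Mathlib

section
/- Let K_0(z) := ∫_0^∞ e^{−z·cosh u} du for z > 0. Then for every x ∈ ℝ, lim_{β→∞} β^{−1}·K_0(e^{−βx}) = max(x, 0). -/
open MeasureTheory Filter Topology

/-- Macdonald function of order zero: `K₀(z) = ∫_0^∞ e^{-z cosh u} du`. -/
noncomputable def K0 (z : ℝ) : ℝ := ∫ u in Set.Ioi (0:ℝ), Real.exp (-(z * Real.cosh u))

/-!
Write `z = e^{-t}`. For `0 < u ≤ t` we have `z cosh u ≤ e^{u-t} ≤ 1`, so by `e^{-a} ≥ 1 - a`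
the integrand is at least `1 - e^{u-t}`, whence `K₀(e^{-t}) ≥ t - 1`. Conversely
`z cosh u ≥ e^{u-s}` with `s = t + log 2`, and `e^{-e^{u-s}}` is at most `1` for `u ≤ s` and
at most `e^{s-u}` beyond, so `K₀(e^{-t}) ≤ max t 0 + log 2 + 1`. Hence
`K₀(e^{-t}) = max t 0 + O(1)`, and dividing by `β` at `t = β x` gives the limit.
-/

open Set Real

lemma cosh_le_exp_of_nonneg {u : ℝ} (hu : 0 ≤ u) : cosh u ≤ exp u := by
  rw [cosh_eq]
  linarith [exp_le_exp.2 (neg_le_self hu)]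

lemma exp_div_two_le_cosh (u : ℝ) : exp u / 2 ≤ cosh u := by
  rw [cosh_eq]
  linarith [exp_pos (-u)]

lemma exp_neg_exp_sub_le (s u : ℝ) : exp (-exp (u - s)) ≤ exp (s - u) := by
  rw [exp_le_exp]
  linarith [add_one_le_exp (u - s)]

lemma integrableOn_exp_neg_exp_sub (s a : ℝ) :
    IntegrableOn (fun u => exp (-exp (u - s))) (Ioi a) := by
  refine ((integrableOn_exp_neg_Ioi a).const_mul (exp s)).mono'
    (Continuous.aestronglyMeasurable (by fun_prop)) (Eventually.of_forall fun u => ?_)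
  rw [norm_of_nonneg (exp_pos _).le, ← exp_add, ← sub_eq_add_neg]
  exact exp_neg_exp_sub_le s u

lemma integral_exp_neg_exp_sub_le (s : ℝ) :
    ∫ u in Ioi 0, exp (-exp (u - s)) ≤ max s 0 + 1 := by
  set T := max s 0
  have hT : 0 ≤ T := le_max_right s 0
  rw [← intervalIntegral.integral_interval_add_Ioi (integrableOn_exp_neg_exp_sub s 0)
    (integrableOn_exp_neg_exp_sub s T)]
  gcongr ?_ + ?_
  · calc ∫ u in 0..T, exp (-exp (u - s)) ≤ ∫ _ in 0..T, (1 : ℝ) :=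
          intervalIntegral.integral_mono_on hT
            ((by fun_prop : Continuous fun u => exp (-exp (u - s))).intervalIntegrable _ _)
            intervalIntegrable_const fun u _ => exp_le_one_iff.2 (neg_nonpos.2 (exp_pos _).le)
      _ = T := by simp
  · calc ∫ u in Ioi T, exp (-exp (u - s)) ≤ ∫ u in Ioi T, exp T * exp (-u) := by
          refine setIntegral_mono_on (integrableOn_exp_neg_exp_sub s T)
            ((integrableOn_exp_neg_Ioi T).const_mul _) measurableSet_Ioi fun u _ => ?_
          rw [← exp_add, ← sub_eq_add_neg]
          exact (exp_neg_exp_sub_le s u).trans (exp_le_exp.2 (by linarith [le_max_left s 0]))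
      _ = 1 := by
          rw [integral_const_mul, integral_exp_neg_Ioi, ← exp_add, add_neg_cancel, exp_zero]

lemma exp_neg_exp_cosh_le (t u : ℝ) :
    exp (-(exp (-t) * cosh u)) ≤ exp (-exp (u - (t + log 2))) := by
  have h : exp (u - (t + log 2)) = exp (-t) * (exp u / 2) := by
    rw [sub_add_eq_sub_sub, exp_sub, exp_log two_pos, sub_eq_neg_add, exp_add, mul_div_assoc]
  rw [exp_le_exp, neg_le_neg_iff, h]
  exact mul_le_mul_of_nonneg_left (exp_div_two_le_cosh u) (exp_pos _).le

lemma integrableOn_K0_integrand (t : ℝ) :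
    IntegrableOn (fun u => exp (-(exp (-t) * cosh u))) (Ioi 0) :=
  (integrableOn_exp_neg_exp_sub (t + log 2) 0).mono'
    (Continuous.aestronglyMeasurable (by fun_prop))
    (Eventually.of_forall fun u => by
      rw [norm_of_nonneg (exp_pos _).le]
      exact exp_neg_exp_cosh_le t u)

lemma K0_nonneg (z : ℝ) : 0 ≤ K0 z :=
  setIntegral_nonneg measurableSet_Ioi fun _ _ => (exp_pos _).le

lemma K0_exp_neg_le (t : ℝ) : K0 (exp (-t)) ≤ max t 0 + log 2 + 1 :=
  calc K0 (exp (-t)) ≤ ∫ u in Ioi 0, exp (-exp (u - (t + log 2))) :=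
        setIntegral_mono_on (integrableOn_K0_integrand t)
          (integrableOn_exp_neg_exp_sub _ 0) measurableSet_Ioi fun u _ => exp_neg_exp_cosh_le t u
    _ ≤ max (t + log 2) 0 + 1 := integral_exp_neg_exp_sub_le _
    _ ≤ max t 0 + log 2 + 1 := by
        have := log_nonneg one_le_two
        gcongr
        exact max_le (by linarith [le_max_left t 0]) (by linarith [le_max_right t 0])

lemma max_sub_one_le_K0_exp_neg (t : ℝ) : max t 0 - 1 ≤ K0 (exp (-t)) := by
  rcases le_total t 0 with ht | ht
  · rw [max_eq_right ht]
    linarith [K0_nonneg (exp (-t))]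
  rw [max_eq_left ht]
  have hpt : ∀ u ∈ Icc 0 t, 1 - exp (u - t) ≤ exp (-(exp (-t) * cosh u)) := fun u hu =>
    calc 1 - exp (u - t) ≤ exp (-exp (u - t)) := by linarith [add_one_le_exp (-exp (u - t))]
      _ ≤ exp (-(exp (-t) * cosh u)) := by
        rw [exp_le_exp, neg_le_neg_iff, sub_eq_neg_add, exp_add]
        exact mul_le_mul_of_nonneg_left (cosh_le_exp_of_nonneg hu.1) (exp_pos _).le
  calc t - 1 ≤ t - (1 - exp (-t)) := by linarith [exp_pos (-t)]
    _ = ∫ u in 0..t, (1 - exp (u - t)) := by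
        rw [intervalIntegral.integral_sub intervalIntegrable_const
          ((by fun_prop : Continuous fun u => exp (u - t)).intervalIntegrable _ _),
          intervalIntegral.integral_comp_sub_right, integral_exp]
        simp
    _ ≤ ∫ u in 0..t, exp (-(exp (-t) * cosh u)) :=
        intervalIntegral.integral_mono_on ht
          ((by fun_prop : Continuous fun u => 1 - exp (u - t)).intervalIntegrable _ _)
          ((by fun_prop : Continuous fun u => exp (-(exp (-t) * cosh u))).intervalIntegrable _ _)
          hpt
    _ = ∫ u in Ioc 0 t, exp (-(exp (-t) * cosh u)) := intervalIntegral.integral_of_le ht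
    _ ≤ K0 (exp (-t)) :=
        setIntegral_mono_set (integrableOn_K0_integrand t)
          (Eventually.of_forall fun _ => (exp_pos _).le)
          (Eventually.of_forall Ioc_subset_Ioi_self)

lemma abs_K0_exp_neg_sub_max_le (t : ℝ) : |K0 (exp (-t)) - max t 0| ≤ log 2 + 1 := by
  rw [abs_sub_le_iff]
  constructor
  · linarith [K0_exp_neg_le t]
  · linarith [max_sub_one_le_K0_exp_neg t, log_nonneg one_le_two]

/-- For every `x ∈ ℝ`, `lim_{β→∞} β⁻¹ K₀(e^{-βx}) = max(x,0)`. -/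
theorem K0_scaling_limit (x : ℝ) :
    Tendsto (fun β : ℝ => β⁻¹ * K0 (Real.exp (-(β * x)))) atTop (𝓝 (max x 0)) := by
  have hbound : ∀ β > 0, |β⁻¹ * K0 (exp (-(β * x))) - max x 0| ≤ β⁻¹ * (log 2 + 1) := by
    intro β hβ
    have hmax : β * max x 0 = max (β * x) 0 := by rw [mul_max_of_nonneg _ _ hβ.le, mul_zero]
    rw [← inv_mul_cancel_left₀ hβ.ne' (max x 0), hmax, ← mul_sub, abs_mul,
      abs_of_pos (inv_pos.2 hβ)]
    exact mul_le_mul_of_nonneg_left (abs_K0_exp_neg_sub_max_le _) (inv_pos.2 hβ).le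
  rw [tendsto_iff_norm_sub_tendsto_zero]
  refine squeeze_zero_norm' ?_ (by simpa using tendsto_inv_atTop_zero.mul_const (log 2 + 1))
  filter_upwards [eventually_gt_atTop 0] with β hβ
  simpa only [norm_norm, norm_eq_abs, abs_abs] using hbound β hβ
end

section
/- For x ∈ W_N, the Lebesgue volume of the set of real triangular arrays (T_{j,k})_{1≤k≤j≤N−1} ∈ ℝ^{N(N−1)/2} satisfying the Gelfand–Tsetlin interlacing conditions T_{j+1,k} ≤ T_{j,k} ≤ T_{j+1,k+1} for all 1 ≤ k ≤ j ≤ N−1 (with the convention T_{N,k} := x_k) equals h_N(x) / ∏_{j=1}^{N−1} j!. -/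
open MeasureTheory Filter Topology

/-- Index set of real triangular arrays `(T_{j,k})_{1 ≤ k ≤ j ≤ N-1}` (0-based rows `0,…,N-2`,
row `j` having entries `k = 0,…,j`). -/
def TriIdx (N : ℕ) : Type :=
  {p : Fin N × Fin N // p.1.val < N - 1 ∧ p.2.val ≤ p.1.val}

noncomputable instance (N : ℕ) : Fintype (TriIdx N) := by
  unfold TriIdx; infer_instance

/-- Entry `T_{j,k}` (0-based) of the triangular array `T` completed by the bottom row
`T_{N-1,k} := x_k`; junk value `0` out of range. -/
noncomputable def ent (N : ℕ) (T : TriIdx N → ℝ) (x : Fin N → ℝ) (j k : ℕ) : ℝ :=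
  if h : j < N - 1 ∧ k ≤ j then
    T ⟨(⟨j, by omega⟩, ⟨k, by omega⟩), ⟨h.1, h.2⟩⟩
  else if h2 : j = N - 1 ∧ k < N then x ⟨k, h2.2⟩ else 0

/-- The Vandermonde product `h_N(x) = ∏_{j<k} (x_k - x_j)`. -/
noncomputable def hVdm (N : ℕ) (x : Fin N → ℝ) : ℝ :=
  ∏ j : Fin N, ∏ k ∈ Finset.Ioi j, (x k - x j)

/-!
Splitting off the row of `T` next to the bottom row `x` identifies the polytope of `x` with the
set of pairs `(y, T')` where `y` interlaces with `x`, i.e. lies in the box `∏ₖ [x_k, x_{k+1}]`,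
and `T'` lies in the polytope of `y`. By Tonelli and induction the volume is therefore the
integral of `h_{N-1}(y) / ∏_{j<N-1} j!` over that box. Expanding the Vandermonde determinant
`h_{N-1}(y)` by Leibniz, the integral factorises entrywise into the determinant of
`((x_{j+1}^{i+1} - x_j^{i+1}) / (i+1))`, which row operations turn into `h_N(x) / (N-1)!`.
The induction runs over monotone `x`, because every point of the box of a monotone `x` is
itself monotone.
-/

open scoped Nat

theorem Matrix.det_vandermonde_eq_det_sub_pow {R : Type*} [CommRing R] {n : ℕ}
    (x : Fin (n + 1) → R) :
    (vandermonde x).det =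
      (of fun i j : Fin n => x j.succ ^ ((i : ℕ) + 1) - x j.castSucc ^ ((i : ℕ) + 1)).det := by
  set B : Matrix (Fin (n + 1)) (Fin (n + 1)) R :=
    of (Fin.cons (fun j => x 0 ^ (j : ℕ)) fun i j => x i.succ ^ (j : ℕ) - x i.castSucc ^ (j : ℕ))
  have hB : (vandermonde x).det = B.det :=
    det_eq_of_forall_row_eq_smul_add_pred (fun _ => 1) (fun _ => rfl)
      (fun i j => by simp [B, vandermonde_apply])
  have hsub : B.submatrix Fin.succ Fin.succ =
      (of fun i j : Fin n => x j.succ ^ ((i : ℕ) + 1) - x j.castSucc ^ ((i : ℕ) + 1)).transpose := by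
    ext i j
    simp [B]
  -- the first column of `B` is `(1, 0, …, 0)`
  rw [hB, det_succ_column_zero, Fin.sum_univ_succ, Finset.sum_eq_zero fun i _ => by simp [B],
    Fin.succAbove_zero, hsub, det_transpose]
  simp [B]

theorem setIntegral_univ_pi_det {ι α : Type*} [Fintype ι] [DecidableEq ι] [MeasurableSpace α]
    (μ : Measure α) [SigmaFinite μ] (f : ι → α → ℝ) (s : ι → Set α)
    (hf : ∀ i j, IntegrableOn (f i) (s j) μ) :
    ∫ y in Set.univ.pi s, (Matrix.of fun i j => f i (y j)).det ∂Measure.pi (fun _ => μ) =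
      (Matrix.of fun i j => ∫ t in s j, f i t ∂μ).det := by
  simp only [Matrix.det_apply', Matrix.of_apply, Measure.restrict_pi_pi]
  rw [integral_finsetSum _ fun σ _ => (Integrable.fintype_prod fun j => hf _ j).const_mul _]
  refine Finset.sum_congr rfl fun σ _ => ?_
  rw [integral_const_mul, integral_fintype_prod_eq_prod (fun j t => f (σ j) t)]

theorem hVdm_eq_det_vandermonde {n : ℕ} (y : Fin n → ℝ) :
    hVdm n y = (Matrix.vandermonde y).det :=
  (Matrix.det_vandermonde y).symm

theorem continuous_hVdm (n : ℕ) : Continuous (hVdm n) := by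
  unfold hVdm
  fun_prop

theorem hVdm_nonneg {n : ℕ} {y : Fin n → ℝ} (hy : Monotone y) : 0 ≤ hVdm n y :=
  Finset.prod_nonneg fun _ _ => Finset.prod_nonneg fun _ hk =>
    sub_nonneg.mpr (hy (Finset.mem_Ioi.mp hk).le)

def interlacingBox {n : ℕ} (x : Fin (n + 1) → ℝ) : Set (Fin n → ℝ) :=
  Set.univ.pi fun k => Set.Icc (x k.castSucc) (x k.succ)

theorem measurableSet_interlacingBox {n : ℕ} (x : Fin (n + 1) → ℝ) :
    MeasurableSet (interlacingBox x) :=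
  .univ_pi fun _ => measurableSet_Icc

theorem Monotone.of_mem_interlacingBox {n : ℕ} {x : Fin (n + 1) → ℝ} (hx : Monotone x)
    {y : Fin n → ℝ} (hy : y ∈ interlacingBox x) : Monotone y := by
  intro i j hij
  rcases hij.eq_or_lt with rfl | hij
  · rfl
  calc y i ≤ x i.succ := (hy i trivial).2
    _ ≤ x j.castSucc := hx (Fin.succ_le_castSucc_iff.mpr hij)
    _ ≤ y j := (hy j trivial).1

theorem setIntegral_hVdm_interlacingBox {n : ℕ} {x : Fin (n + 1) → ℝ} (hx : Monotone x) :
    ∫ y in interlacingBox x, hVdm n y = hVdm (n + 1) x / n ! := by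
  have hpow (i : ℕ) (j : Fin n) : ∫ t in Set.Icc (x j.castSucc) (x j.succ), t ^ i =
      (x j.succ ^ (i + 1) - x j.castSucc ^ (i + 1)) / (i + 1) := by
    rw [integral_Icc_eq_integral_Ioc, ← intervalIntegral.integral_of_le (hx j.castSucc_le_succ),
      integral_pow]
  have hdet (y : Fin n → ℝ) : hVdm n y = (Matrix.of fun i j : Fin n => y j ^ (i : ℕ)).det := by
    rw [hVdm_eq_det_vandermonde, ← Matrix.det_transpose]
    rfl
  have hfact : ∏ i : Fin n, (((i : ℕ) : ℝ) + 1)⁻¹ = (n ! : ℝ)⁻¹ := by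
    rw [Finset.prod_inv_distrib, Fin.prod_univ_eq_prod_range (fun i => (i : ℝ) + 1),
      ← Finset.prod_range_add_one_eq_factorial]
    push_cast
    rfl
  simp_rw [hdet]
  rw [interlacingBox, volume_pi, setIntegral_univ_pi_det volume (fun (i : Fin n) t => t ^ (i : ℕ))
    _ fun i j => (continuous_pow _).integrableOn_Icc]
  simp only [hpow, div_eq_inv_mul, hVdm_eq_det_vandermonde, Matrix.det_vandermonde_eq_det_sub_pow]
  rw [← hfact, ← Matrix.det_mul_column]
  rfl

def gtPolytope (N : ℕ) (x : Fin N → ℝ) : Set (TriIdx N → ℝ) :=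
  {T | ∀ j k : ℕ, j < N - 1 → k ≤ j →
    ent N T x (j + 1) k ≤ ent N T x j k ∧ ent N T x j k ≤ ent N T x (j + 1) (k + 1)}

/-- `inl k` is entry `k` of row `N - 1`, the row next to the bottom row; `inr` embeds the rows
above it. -/
def TriIdx.sumEquiv (N : ℕ) : Fin N ⊕ TriIdx N ≃ TriIdx (N + 1) where
  toFun
    | .inl k => ⟨(⟨N - 1, by omega⟩, k.castSucc),
        show N - 1 < N + 1 - 1 ∧ (k : ℕ) ≤ N - 1 by have := k.2; omega⟩
    | .inr q => ⟨(q.1.1.castSucc, q.1.2.castSucc),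
        show (q.1.1 : ℕ) < N + 1 - 1 ∧ (q.1.2 : ℕ) ≤ q.1.1 by have := q.2; omega⟩
  invFun p :=
    if h : p.1.1.val = N - 1 then .inl ⟨p.1.2, by have := p.2; omega⟩
    else .inr ⟨(⟨p.1.1, by have := p.2; omega⟩, ⟨p.1.2, by have := p.2; omega⟩),
      show (p.1.1 : ℕ) < N - 1 ∧ (p.1.2 : ℕ) ≤ p.1.1 by have := p.2; omega⟩
  left_inv := by
    rintro (k | q)
    · simp only [↓reduceDIte, Fin.val_castSucc]
    · have hq : (q.1.1 : ℕ) ≠ N - 1 := by have := q.2; omega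
      simp only [Fin.val_castSucc, hq, dite_false]
      rfl
  right_inv := by
    rintro ⟨⟨j, k⟩, h⟩
    by_cases hj : (j : ℕ) = N - 1
    · simp only [hj, dite_true]
      exact Subtype.ext (Prod.ext (Fin.ext hj.symm) rfl)
    · simp only [hj, dite_false]
      rfl

namespace TriIdx

variable {N : ℕ}

def lastRow (T : TriIdx (N + 1) → ℝ) : Fin N → ℝ := fun k => T (sumEquiv N (.inl k))

def initRows (T : TriIdx (N + 1) → ℝ) : TriIdx N → ℝ := fun q => T (sumEquiv N (.inr q))

def splitLastRow (N : ℕ) : (TriIdx (N + 1) → ℝ) ≃ᵐ (Fin N → ℝ) × (TriIdx N → ℝ) :=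
  (MeasurableEquiv.piCongrLeft (fun _ => ℝ) (sumEquiv N)).symm.trans
    (MeasurableEquiv.sumPiEquivProdPi fun _ => ℝ)

theorem splitLastRow_apply (T : TriIdx (N + 1) → ℝ) :
    splitLastRow N T = (lastRow T, initRows T) :=
  rfl

theorem measurePreserving_splitLastRow (N : ℕ) : MeasurePreserving (splitLastRow N) :=
  ((volume_measurePreserving_piCongrLeft (fun _ => ℝ) (sumEquiv N)).symm _).trans
    (measurePreserving_sumPiEquivProdPi fun _ => volume)

end TriIdx

open TriIdx

theorem ent_sub_one (N : ℕ) (T : TriIdx N → ℝ) (x : Fin N → ℝ) {k : ℕ} (hk : k < N) :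
    ent N T x (N - 1) k = x ⟨k, hk⟩ := by
  rw [ent, dif_neg (by omega), dif_pos ⟨rfl, hk⟩]

theorem ent_initRows {N : ℕ} (T : TriIdx (N + 1) → ℝ) (x : Fin (N + 1) → ℝ) {j : ℕ}
    (hj : j < N) (k : ℕ) : ent N (initRows T) (lastRow T) j k = ent (N + 1) T x j k := by
  unfold ent
  split_ifs <;> first | omega | rfl | (obtain ⟨rfl, -⟩ := ‹j = N - 1 ∧ k < N›; rfl)

theorem continuous_ent (N j k : ℕ) :
    Continuous fun p : (Fin N → ℝ) × (TriIdx N → ℝ) => ent N p.2 p.1 j k := by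
  unfold ent
  split_ifs <;> fun_prop

theorem mem_gtPolytope_succ_iff {N : ℕ} (x : Fin (N + 1) → ℝ) (T : TriIdx (N + 1) → ℝ) :
    T ∈ gtPolytope (N + 1) x ↔
      lastRow T ∈ interlacingBox x ∧ initRows T ∈ gtPolytope N (lastRow T) := by
  have hbot (k : ℕ) (hk : k < N + 1) : ent (N + 1) T x N k = x ⟨k, hk⟩ :=
    ent_sub_one (N + 1) T x hk
  have hlast (k : ℕ) (hk : k < N) : ent (N + 1) T x (N - 1) k = lastRow T ⟨k, hk⟩ := by
    rw [← ent_initRows T x (by omega), ent_sub_one]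
  have hinit (j : ℕ) (hj : j < N) (k : ℕ) :
      ent (N + 1) T x j k = ent N (initRows T) (lastRow T) j k :=
    (ent_initRows T x hj k).symm
  simp only [gtPolytope, interlacingBox, Set.mem_ofPred_eq, Set.mem_pi, Set.mem_univ,
    Set.mem_Icc, true_implies, add_tsub_cancel_right]
  constructor
  · intro h
    refine ⟨fun ⟨k, hk⟩ => ?_, fun j k hj hk => ?_⟩
    · have := h (N - 1) k (by omega) (by omega)
      rwa [Nat.sub_add_cancel (by omega), hbot, hlast, hbot] at this
    · rw [← hinit _ (by omega), ← hinit _ (by omega), ← hinit _ (by omega)]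
      exact h j k (by omega) hk
  · rintro ⟨hbox, hgt⟩ j k hj hk
    rcases (show j < N - 1 ∨ j = N - 1 by omega) with hj' | rfl
    · rw [hinit _ (by omega), hinit _ (by omega), hinit _ (by omega)]
      exact hgt j k hj' hk
    · rw [Nat.sub_add_cancel (by omega), hbot, hbot, hlast _ (by omega)]
      exact hbox ⟨k, by omega⟩

theorem isClosed_setOf_mem_gtPolytope (N : ℕ) :
    IsClosed {p : (Fin N → ℝ) × (TriIdx N → ℝ) | p.2 ∈ gtPolytope N p.1} := by
  simp only [gtPolytope, Set.mem_ofPred_eq]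
  simp only [Set.ofPred_forall, Set.ofPred_and]
  exact isClosed_iInter fun j => isClosed_iInter fun k => isClosed_iInter fun _ =>
    isClosed_iInter fun _ =>
      (isClosed_le (continuous_ent N _ _) (continuous_ent N _ _)).inter
        (isClosed_le (continuous_ent N _ _) (continuous_ent N _ _))

theorem volume_gtPolytope_succ {N : ℕ} (x : Fin (N + 1) → ℝ) :
    volume (gtPolytope (N + 1) x) = ∫⁻ y in interlacingBox x, volume (gtPolytope N y) := by
  set A := {p : (Fin N → ℝ) × (TriIdx N → ℝ) | p.1 ∈ interlacingBox x ∧ p.2 ∈ gtPolytope N p.1}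
  have hA : MeasurableSet A := ((measurableSet_interlacingBox x).preimage measurable_fst).inter
    (isClosed_setOf_mem_gtPolytope N).measurableSet
  have hpre : splitLastRow N ⁻¹' A = gtPolytope (N + 1) x := Set.ext fun T => by
    rw [Set.mem_preimage, splitLastRow_apply, mem_gtPolytope_succ_iff]
    rfl
  rw [← hpre, (measurePreserving_splitLastRow N).measure_preimage hA.nullMeasurableSet,
    Measure.volume_eq_prod, Measure.prod_apply hA,
    ← lintegral_indicator (measurableSet_interlacingBox x)]
  congr 1
  funext y
  by_cases hy : y ∈ interlacingBox x <;> simp [A, hy]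

theorem volume_gtPolytope {N : ℕ} {x : Fin N → ℝ} (hx : Monotone x) :
    volume (gtPolytope N x) = ENNReal.ofReal (hVdm N x / ∏ j ∈ Finset.range N, (j ! : ℝ)) := by
  induction N with
  | zero =>
    have : IsEmpty (TriIdx 0) := ⟨fun q => q.1.1.elim0⟩
    have huniv : gtPolytope 0 x = Set.univ.pi fun _ => Set.univ := by ext; simp [gtPolytope]
    rw [huniv, volume_pi_pi]
    simp [hVdm]
  | succ N ih =>
    set c : ℝ := ∏ j ∈ Finset.range N, (j ! : ℝ)
    have hint : IntegrableOn (fun y => hVdm N y / c) (interlacingBox x) :=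
      ((continuous_hVdm N).div_const c).continuousOn.integrableOn_compact
        (isCompact_univ_pi fun _ => isCompact_Icc)
    have hnonneg : 0 ≤ᵐ[volume.restrict (interlacingBox x)] fun y => hVdm N y / c := by
      filter_upwards [ae_restrict_mem (measurableSet_interlacingBox x)] with y hy
      exact div_nonneg (hVdm_nonneg (hx.of_mem_interlacingBox hy))
        (Finset.prod_nonneg fun _ _ => Nat.cast_nonneg _)
    calc volume (gtPolytope (N + 1) x)
        = ∫⁻ y in interlacingBox x, volume (gtPolytope N y) := volume_gtPolytope_succ x
      _ = ∫⁻ y in interlacingBox x, ENNReal.ofReal (hVdm N y / c) :=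
        setLIntegral_congr_fun (measurableSet_interlacingBox x) fun y hy =>
          ih (hx.of_mem_interlacingBox hy)
      _ = ENNReal.ofReal (∫ y in interlacingBox x, hVdm N y / c) :=
        (ofReal_integral_eq_lintegral_ofReal hint hnonneg).symm
      _ = ENNReal.ofReal (hVdm (N + 1) x / ∏ j ∈ Finset.range (N + 1), (j ! : ℝ)) := by
        rw [integral_div, setIntegral_hVdm_interlacingBox hx, Finset.prod_range_succ, div_div,
          mul_comm]

theorem gelfand_tsetlin_polytope_volume_general (N : ℕ) (x : Fin N → ℝ)
    (hx : StrictMono x) :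
    volume {T : TriIdx N → ℝ | ∀ j k : ℕ, j < N - 1 → k ≤ j →
        ent N T x (j + 1) k ≤ ent N T x j k ∧ ent N T x j k ≤ ent N T x (j + 1) (k + 1)}
      = ENNReal.ofReal (hVdm N x / ∏ j ∈ Finset.range N, (j.factorial : ℝ)) :=
  volume_gtPolytope hx.monotone

/-- The volume of the Gelfand–Tsetlin polytope with bottom row `x ∈ W_N` equals
`h_N(x) / ∏_{j=1}^{N-1} j!`. -/
theorem gelfand_tsetlin_polytope_volume (N : ℕ) (hN : 2 ≤ N) (x : Fin N → ℝ)
    (hx : StrictMono x) :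
    volume {T : TriIdx N → ℝ | ∀ j k : ℕ, j < N - 1 → k ≤ j →
        ent N T x (j + 1) k ≤ ent N T x j k ∧ ent N T x j k ≤ ent N T x (j + 1) (k + 1)}
      = ENNReal.ofReal (hVdm N x / ∏ j ∈ Finset.range N, (j.factorial : ℝ)) :=
  gelfand_tsetlin_polytope_volume_general N x hx
end

section
/- For each fixed y ∈ ℝ, the function (t,x) ↦ Q_ξ(t,y|x) satisfies, for all t > 0 and x ∈ ℝ, the backward Kolmogorov equation ∂Q_ξ(t,y|x)/∂t = (1/2)·∂²Q_ξ(t,y|x)/∂x² − (1/(2ξ²))·e^{−2x/ξ}·Q_ξ(t,y|x). -/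
open MeasureTheory Filter Topology

/-- Macdonald function of imaginary order: `K_{ik}(z) = ∫_0^∞ e^{-z cosh u} cos(ku) du`. -/
noncomputable def Kik (k z : ℝ) : ℝ :=
  ∫ u in Set.Ioi (0:ℝ), Real.exp (-(z * Real.cosh u)) * Real.cos (k * u)

/-- Transition probability density `Q_ξ(t,y|x)` of the ξ-killing Brownian motion. -/
noncomputable def Qxi (ξ t y x : ℝ) : ℝ :=
  (1 / Real.pi ^ 2) *
    ∫ k : ℝ, Real.exp (-(k ^ 2 * t) / 2) * Kik (ξ * k) (Real.exp (-(x / ξ)))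
      * Kik (ξ * k) (Real.exp (-(y / ξ))) * (ξ * k * Real.sinh (Real.pi * ξ * k))

/-- Survival probability `N_ξ(T,x) = ∫_ℝ Q_ξ(T,y|x) dy`. -/
noncomputable def Nxi (ξ T x : ℝ) : ℝ := ∫ y : ℝ, Qxi ξ T y x

/-!
The integral defining `Q_ξ` is an eigenfunction expansion. The function
`ψ_k(x) = K_{iξk}(e^{-x/ξ})` satisfies `½ ψ_k'' - e^{-2x/ξ}/(2ξ²) ψ_k = -(k²/2) ψ_k`, which is
the modified Bessel equation `z² K'' + z K' - (z² - (ξk)²) K = 0` after the substitution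
`z = e^{-x/ξ}`. Bessel's equation itself comes from writing the `z`-derivatives of `K_{iξk}(z)`
as the integrals of `coshⁿ u e^{-z cosh u} cos(ξku)` and integrating by parts in `u`.

These `z`-derivatives are bounded uniformly in `k`, locally uniformly in `x`, while the spectral
density `ξk sinh(πξk)` grows only like `e^{πξ|k|}`. So the Gaussian factor `e^{-k²t/2}` dominates
everything for `t` near a positive time, and `∂ₜ` and `∂ₓ²` can be taken under the
`k`-integral. There they act as multiplication by `-k²/2` and as the Schrödinger operator
above, which gives the equation.
-/

open Real Set
open scoped Nat

lemma abs_le_cosh (u : ℝ) : |u| ≤ cosh u :=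
  cosh_abs u ▸ (self_le_sinh_iff.2 (abs_nonneg u)).trans (sinh_lt_cosh _).le

lemma abs_sinh_le_cosh (u : ℝ) : |sinh u| ≤ cosh u :=
  cosh_abs u ▸ (abs_sinh u).trans_le (sinh_lt_cosh _).le

lemma eventually_forall_abs_le_of_continuousAt {F : ℝ → ℝ → ℝ} {G : ℝ → ℝ} {x : ℝ}
    (hG : ContinuousAt G x) (hF : ∀ r k, |F r k| ≤ G r) :
    ∀ᶠ r in 𝓝 x, ∀ k, |F r k| ≤ G x + 1 :=
  (hG.eventually (eventually_lt_nhds (lt_add_one _))).mono fun r hr k => (hF r k).trans hr.le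

lemma abs_sinh_le_exp_abs (v : ℝ) : |sinh v| ≤ exp |v| := by
  rw [abs_sinh, ← exp_sub_cosh]; linarith [cosh_pos |v|]

lemma pow_le_factorial_div_mul_exp {s b : ℝ} (hs : 0 ≤ s) (hb : 0 < b) (n : ℕ) :
    s ^ n ≤ n ! / b ^ n * exp (b * s) := by
  have h := pow_div_factorial_le_exp _ (mul_nonneg hb.le hs) n
  rw [div_le_iff₀ (by positivity), mul_pow] at h
  rw [div_mul_eq_mul_div, le_div_iff₀ (by positivity)]
  linarith

/-- `KikMoment n k z = (-1)ⁿ ∂ⁿ/∂zⁿ K_{ik}(z)`. -/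
noncomputable def KikMoment (n : ℕ) (k z : ℝ) : ℝ :=
  ∫ u in Ioi (0:ℝ), cosh u ^ n * exp (-(z * cosh u)) * cos (k * u)

lemma Kik_eq_KikMoment_zero (k z : ℝ) : Kik k z = KikMoment 0 k z := by
  simp [Kik, KikMoment]

lemma norm_KikMoment_integrand_le {a z : ℝ} (ha : 0 < a) (haz : a ≤ z) (n : ℕ) (k u : ℝ) :
    ‖cosh u ^ n * exp (-(z * cosh u)) * cos (k * u)‖
      ≤ n ! / (a / 2) ^ n * exp (-(a / 2) * u) :=
  calc ‖cosh u ^ n * exp (-(z * cosh u)) * cos (k * u)‖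
      ≤ cosh u ^ n * exp (-(a * cosh u)) := by
        rw [norm_mul, Real.norm_of_nonneg (by positivity)]
        refine mul_le_of_le_one_right (by positivity) (abs_cos_le_one _) |>.trans ?_
        gcongr
    _ ≤ n ! / (a / 2) ^ n * exp (a / 2 * cosh u) * exp (-(a * cosh u)) := by
        gcongr; exact pow_le_factorial_div_mul_exp (cosh_pos u).le (half_pos ha) n
    _ = n ! / (a / 2) ^ n * exp (-(a / 2 * cosh u)) := by
        rw [mul_assoc, ← exp_add]; ring_nf
    _ ≤ n ! / (a / 2) ^ n * exp (-(a / 2) * u) := by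
        rw [neg_mul]; gcongr; exact (le_abs_self u).trans (abs_le_cosh u)

lemma integrableOn_KikMoment_integrand (n : ℕ) (k : ℝ) {z : ℝ} (hz : 0 < z) :
    IntegrableOn (fun u => cosh u ^ n * exp (-(z * cosh u)) * cos (k * u)) (Ioi 0) :=
  ((exp_neg_integrableOn_Ioi 0 (half_pos hz)).const_mul _).mono' (by fun_prop)
    (ae_restrict_of_forall_mem measurableSet_Ioi fun _ _ =>
      norm_KikMoment_integrand_le hz le_rfl n k _)

lemma abs_KikMoment_le (n : ℕ) (k : ℝ) {z : ℝ} (hz : 0 < z) :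
    |KikMoment n k z| ≤ n ! / (z / 2) ^ (n + 1) := by
  have hexp : ∫ u in Ioi (0:ℝ), exp (-(z / 2) * u) = 1 / (z / 2) := by
    rw [integral_exp_mul_Ioi (by linarith) 0]; simp
  calc |KikMoment n k z| ≤ ∫ u in Ioi (0:ℝ), n ! / (z / 2) ^ n * exp (-(z / 2) * u) :=
        norm_integral_le_of_norm_le ((exp_neg_integrableOn_Ioi 0 (half_pos hz)).const_mul _)
          (ae_restrict_of_forall_mem measurableSet_Ioi fun _ _ =>
            norm_KikMoment_integrand_le hz le_rfl n k _)
    _ = n ! / (z / 2) ^ (n + 1) := by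
        rw [integral_const_mul, hexp, pow_succ]; field_simp

lemma continuous_KikMoment (n : ℕ) {z : ℝ} (hz : 0 < z) : Continuous fun k => KikMoment n k z :=
  continuous_of_dominated (fun _ => by fun_prop)
    (fun k => ae_restrict_of_forall_mem measurableSet_Ioi fun _ _ =>
      norm_KikMoment_integrand_le hz le_rfl n k _)
    ((exp_neg_integrableOn_Ioi 0 (half_pos hz)).const_mul _)
    (ae_of_all _ fun _ => by fun_prop)

lemma hasDerivAt_KikMoment (n : ℕ) (k : ℝ) {z : ℝ} (hz : 0 < z) :
    HasDerivAt (KikMoment n k) (-KikMoment (n + 1) k z) z := by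
  have hderiv (u w : ℝ) : HasDerivAt (fun w => cosh u ^ n * exp (-(w * cosh u)) * cos (k * u))
      (-(cosh u ^ (n + 1) * exp (-(w * cosh u)) * cos (k * u))) w := by
    have hlin : HasDerivAt (fun w => -(w * cosh u)) (-cosh u) w :=
      ((hasDerivAt_id' w).mul_const (cosh u)).neg.congr_deriv (by ring)
    exact ((hlin.exp.const_mul _).mul_const _).congr_deriv (by ring)
  have key := hasDerivAt_integral_of_dominated_loc_of_deriv_le
    (μ := volume.restrict (Ioi 0))
    (F := fun w u => cosh u ^ n * exp (-(w * cosh u)) * cos (k * u))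
    (Metric.ball_mem_nhds z (half_pos hz))
    (Eventually.of_forall fun _ => by fun_prop) (integrableOn_KikMoment_integrand n k hz)
    (by fun_prop) (bound := fun u => (n + 1)! / (z / 2 / 2) ^ (n + 1) * exp (-(z / 2 / 2) * u))
    (ae_restrict_of_forall_mem measurableSet_Ioi fun u _ w hw => by
      rw [norm_neg]
      refine norm_KikMoment_integrand_le (half_pos hz) ?_ (n + 1) k u
      rw [Metric.mem_ball, Real.dist_eq, abs_lt] at hw
      linarith)
    ((exp_neg_integrableOn_Ioi 0 (by positivity)).const_mul _)
    (ae_of_all _ fun u w _ => hderiv u w)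
  have := key.2
  rwa [integral_neg] at this

/-- The boundary term of the integration by parts giving Bessel's equation for `K_{ik}`. -/
noncomputable def besselBoundaryTerm (k z u : ℝ) : ℝ :=
  -(z * sinh u) * exp (-(z * cosh u)) * cos (k * u) + k * exp (-(z * cosh u)) * sin (k * u)

-- The summands are written with `cosh u ^ 2`, `cosh u ^ 1`, `cosh u ^ 0` so that they are
-- literally the integrands of `KikMoment 2`, `KikMoment 1`, `KikMoment 0`.
lemma hasDerivAt_besselBoundaryTerm (k z u : ℝ) :
    HasDerivAt (besselBoundaryTerm k z)
      (z ^ 2 * (cosh u ^ 2 * exp (-(z * cosh u)) * cos (k * u))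
        - z * (cosh u ^ 1 * exp (-(z * cosh u)) * cos (k * u))
        + (k ^ 2 - z ^ 2) * (cosh u ^ 0 * exp (-(z * cosh u)) * cos (k * u))) u := by
  have hE : HasDerivAt (fun u => exp (-(z * cosh u))) (exp (-(z * cosh u)) * -(z * sinh u)) u :=
    ((hasDerivAt_cosh u).const_mul z).neg.exp
  have hcos : HasDerivAt (fun u => cos (k * u)) (-sin (k * u) * k) u := by
    simpa using ((hasDerivAt_id u).const_mul k).cos
  have hsin : HasDerivAt (fun u => sin (k * u)) (cos (k * u) * k) u := by
    simpa using ((hasDerivAt_id u).const_mul k).sin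
  have hS : HasDerivAt (fun u => -(z * sinh u)) (-(z * cosh u)) u :=
    ((hasDerivAt_sinh u).const_mul z).neg
  refine (((hS.mul hE).mul hcos).add ((hE.const_mul k).mul hsin)).congr_deriv ?_
  simp only [Pi.mul_apply]
  linear_combination (z ^ 2 * exp (-(z * cosh u)) * cos (k * u)) * sinh_sq u

lemma tendsto_besselBoundaryTerm_atTop (k : ℝ) {z : ℝ} (hz : 0 < z) :
    Tendsto (besselBoundaryTerm k z) atTop (𝓝 0) := by
  have hs : Tendsto (fun u => z * cosh u) atTop atTop :=
    Tendsto.const_mul_atTop hz <|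
      tendsto_atTop_mono (fun u => (le_abs_self u).trans (abs_le_cosh u)) tendsto_id
  have hdecay : Tendsto (fun s => s * exp (-s) + |k| * exp (-s)) atTop (𝓝 0) := by
    simpa using (tendsto_pow_mul_exp_neg_atTop_nhds_zero 1).add
      (tendsto_exp_neg_atTop_nhds_zero.const_mul |k|)
  refine squeeze_zero_norm (fun u => ?_) (hdecay.comp hs)
  have hE := (exp_pos (-(z * cosh u))).le
  have h1 : |z * sinh u * exp (-(z * cosh u)) * cos (k * u)|
      ≤ z * cosh u * exp (-(z * cosh u)) := by
    rw [abs_mul, abs_mul, abs_mul, abs_of_pos hz, abs_of_nonneg hE]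
    have hsc := mul_le_mul (abs_sinh_le_cosh u) (abs_cos_le_one (k * u)) (abs_nonneg _)
      (cosh_pos u).le
    calc z * |sinh u| * exp (-(z * cosh u)) * |cos (k * u)|
        = z * exp (-(z * cosh u)) * (|sinh u| * |cos (k * u)|) := by ring
      _ ≤ z * exp (-(z * cosh u)) * (cosh u * 1) := by gcongr
      _ = z * cosh u * exp (-(z * cosh u)) := by ring
  have h2 : |k * exp (-(z * cosh u)) * sin (k * u)| ≤ |k| * exp (-(z * cosh u)) := by
    rw [abs_mul, abs_mul, abs_of_nonneg hE]
    exact mul_le_of_le_one_right (by positivity) (abs_sin_le_one _)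
  simp only [Function.comp, besselBoundaryTerm, Real.norm_eq_abs, neg_mul]
  exact (abs_add_le _ _).trans (by rw [abs_neg]; linarith)

lemma KikMoment_bessel (k : ℝ) {z : ℝ} (hz : 0 < z) :
    z ^ 2 * KikMoment 2 k z - z * KikMoment 1 k z + (k ^ 2 - z ^ 2) * KikMoment 0 k z = 0 := by
  have hint (n : ℕ) := integrableOn_KikMoment_integrand n k hz
  have hftc := integral_Ioi_of_hasDerivAt_of_tendsto'
    (fun u _ => hasDerivAt_besselBoundaryTerm k z u)
    ((((hint 2).const_mul _).sub ((hint 1).const_mul _)).add ((hint 0).const_mul _))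
    (tendsto_besselBoundaryTerm_atTop k hz)
  rw [integral_add ?_ ((hint 0).const_mul _),
    integral_sub ((hint 2).const_mul _) ((hint 1).const_mul _), integral_const_mul,
    integral_const_mul, integral_const_mul] at hftc
  · simpa [besselBoundaryTerm, KikMoment] using hftc
  · exact ((hint 2).const_mul _).sub ((hint 1).const_mul _)

lemma abs_pow_succ_mul_KikMoment_le (n : ℕ) (k : ℝ) {z : ℝ} (hz : 0 < z) :
    |z ^ (n + 1) * KikMoment n k z| ≤ n ! * 2 ^ (n + 1) := by
  rw [abs_mul, abs_of_pos (by positivity)]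
  calc z ^ (n + 1) * |KikMoment n k z| ≤ z ^ (n + 1) * (n ! / (z / 2) ^ (n + 1)) := by
        gcongr; exact abs_KikMoment_le n k hz
    _ = n ! * 2 ^ (n + 1) := by rw [div_pow]; field_simp

noncomputable def eigenfunction (ξ k x : ℝ) : ℝ := Kik (ξ * k) (exp (-(x / ξ)))

noncomputable def eigenfunctionDeriv (ξ k x : ℝ) : ℝ :=
  exp (-(x / ξ)) * KikMoment 1 (ξ * k) (exp (-(x / ξ))) / ξ

noncomputable def eigenfunctionDeriv2 (ξ k x : ℝ) : ℝ :=
  (exp (-(x / ξ)) ^ 2 * KikMoment 2 (ξ * k) (exp (-(x / ξ)))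
    - exp (-(x / ξ)) * KikMoment 1 (ξ * k) (exp (-(x / ξ)))) / ξ ^ 2

section Eigenfunction

variable (ξ k : ℝ)

lemma hasDerivAt_exp_neg_div (x : ℝ) :
    HasDerivAt (fun r => exp (-(r / ξ))) (-(exp (-(x / ξ)) / ξ)) x := by
  simpa [div_eq_mul_inv] using ((hasDerivAt_id x).div_const ξ).neg.exp

lemma hasDerivAt_eigenfunction (x : ℝ) :
    HasDerivAt (eigenfunction ξ k) (eigenfunctionDeriv ξ k x) x := by
  have h := (hasDerivAt_KikMoment 0 (ξ * k) (exp_pos (-(x / ξ)))).comp x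
    (hasDerivAt_exp_neg_div ξ x)
  simp only [Function.comp_def, ← Kik_eq_KikMoment_zero] at h
  exact h.congr_deriv (by rw [eigenfunctionDeriv]; ring)

lemma hasDerivAt_eigenfunctionDeriv (x : ℝ) :
    HasDerivAt (eigenfunctionDeriv ξ k) (eigenfunctionDeriv2 ξ k x) x := by
  have hz := hasDerivAt_exp_neg_div ξ x
  have h := (hz.mul ((hasDerivAt_KikMoment 1 (ξ * k) (exp_pos (-(x / ξ)))).comp x hz)).div_const ξ
  simp only [Function.comp_def, Pi.mul_apply] at h
  exact h.congr_deriv (by rw [eigenfunctionDeriv2]; field_simp; ring)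

lemma continuous_eigenfunction (x : ℝ) : Continuous fun k => eigenfunction ξ k x := by
  simp only [eigenfunction, Kik_eq_KikMoment_zero]
  exact (continuous_KikMoment 0 (exp_pos _)).comp (continuous_const_mul ξ)

lemma continuous_eigenfunctionDeriv (x : ℝ) : Continuous fun k => eigenfunctionDeriv ξ k x :=
  ((continuous_KikMoment 1 (exp_pos _)).comp (continuous_const_mul ξ)).const_mul _ |>.div_const _

lemma continuous_eigenfunctionDeriv2 (x : ℝ) : Continuous fun k => eigenfunctionDeriv2 ξ k x :=
  ((((continuous_KikMoment 2 (exp_pos _)).comp (continuous_const_mul ξ)).const_mul _).sub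
    (((continuous_KikMoment 1 (exp_pos _)).comp (continuous_const_mul ξ)).const_mul _)).div_const _

variable {ξ}

lemma exp_div_eq_one_div_exp_neg_div (x : ℝ) : exp (x / ξ) = 1 / exp (-(x / ξ)) := by
  rw [exp_neg, one_div, inv_inv]

lemma abs_eigenfunction_le (x : ℝ) : |eigenfunction ξ k x| ≤ 2 * exp (x / ξ) := by
  have h := abs_pow_succ_mul_KikMoment_le 0 (ξ * k) (exp_pos (-(x / ξ)))
  rw [abs_mul, abs_of_pos (by positivity)] at h
  rw [eigenfunction, Kik_eq_KikMoment_zero, exp_div_eq_one_div_exp_neg_div, mul_one_div,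
    le_div_iff₀ (exp_pos _)]
  simpa [mul_comm] using h

lemma abs_eigenfunctionDeriv_le (hξ : 0 < ξ) (x : ℝ) :
    |eigenfunctionDeriv ξ k x| ≤ 4 / ξ * exp (x / ξ) := by
  rw [eigenfunctionDeriv, exp_div_eq_one_div_exp_neg_div, mul_one_div]
  set z := exp (-(x / ξ))
  have hz : 0 < z := exp_pos _
  have h := abs_pow_succ_mul_KikMoment_le 1 (ξ * k) hz
  rw [abs_div, abs_of_pos hξ, div_right_comm, div_le_div_iff_of_pos_right hξ, le_div_iff₀ hz]
  calc |z * KikMoment 1 (ξ * k) z| * z = |z ^ 2 * KikMoment 1 (ξ * k) z| := by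
        rw [abs_mul, abs_mul, abs_pow, abs_of_pos hz]; ring
    _ ≤ 4 := h.trans (by norm_num)

lemma abs_eigenfunctionDeriv2_le (hξ : 0 < ξ) (x : ℝ) :
    |eigenfunctionDeriv2 ξ k x| ≤ 20 / ξ ^ 2 * exp (x / ξ) := by
  rw [eigenfunctionDeriv2, exp_div_eq_one_div_exp_neg_div, mul_one_div]
  set z := exp (-(x / ξ))
  have hz : 0 < z := exp_pos _
  have h1 := abs_pow_succ_mul_KikMoment_le 1 (ξ * k) hz
  have h2 := abs_pow_succ_mul_KikMoment_le 2 (ξ * k) hz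
  rw [abs_div, abs_of_pos (pow_pos hξ 2), div_right_comm,
    div_le_div_iff_of_pos_right (by positivity), le_div_iff₀ hz]
  calc |z ^ 2 * KikMoment 2 (ξ * k) z - z * KikMoment 1 (ξ * k) z| * z
      = |(z ^ 2 * KikMoment 2 (ξ * k) z - z * KikMoment 1 (ξ * k) z) * z| := by
        rw [abs_mul, abs_of_pos hz]
    _ = |z ^ 3 * KikMoment 2 (ξ * k) z - z ^ 2 * KikMoment 1 (ξ * k) z| := by ring_nf
    _ ≤ |z ^ 3 * KikMoment 2 (ξ * k) z| + |z ^ 2 * KikMoment 1 (ξ * k) z| := abs_sub _ _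
    _ ≤ 20 := (add_le_add h2 h1).trans (by norm_num [Nat.factorial])

lemma eigenfunction_eigenvalue_eq (hξ : ξ ≠ 0) (x : ℝ) :
    1 / 2 * eigenfunctionDeriv2 ξ k x
        - 1 / (2 * ξ ^ 2) * exp (-(2 * x / ξ)) * eigenfunction ξ k x
      = -(k ^ 2) / 2 * eigenfunction ξ k x := by
  have h := KikMoment_bessel (ξ * k) (exp_pos (-(x / ξ)))
  have hexp : exp (-(2 * x / ξ)) = exp (-(x / ξ)) ^ 2 := by rw [← exp_nat_mul]; ring_nf
  rw [eigenfunctionDeriv2, eigenfunction, Kik_eq_KikMoment_zero, hexp]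
  field_simp
  linear_combination h

end Eigenfunction

def ExpBounded (f : ℝ → ℝ) : Prop := ∃ C c, ∀ k, |f k| ≤ C * exp (c * |k|)

lemma ExpBounded.mul_of_abs_le {w ψ : ℝ → ℝ} {B : ℝ} (hw : ExpBounded w)
    (hψ : ∀ k, |ψ k| ≤ B) : ExpBounded fun k => ψ k * w k := by
  obtain ⟨C, c, hC⟩ := hw
  refine ⟨B * C, c, fun k => ?_⟩
  rw [abs_mul, mul_assoc]
  exact mul_le_mul (hψ k) (hC k) (abs_nonneg _) ((abs_nonneg _).trans (hψ k))

lemma integrable_exp_neg_sq_mul_exp_abs {t : ℝ} (ht : 0 < t) (c : ℝ) :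
    Integrable fun k : ℝ => exp (-(k ^ 2 * t) / 2) * exp (c * |k|) := by
  refine ((integrable_exp_neg_mul_sq (by positivity : 0 < t / 4)).const_mul
    (exp (c ^ 2 / t))).mono' (by fun_prop) (ae_of_all _ fun k => ?_)
  rw [norm_of_nonneg (by positivity), ← exp_add, ← exp_add, exp_le_exp]
  have hsq : c ^ 2 / t + -(t / 4) * k ^ 2 - (-(k ^ 2 * t) / 2 + c * |k|)
      = (c - t * |k| / 2) ^ 2 / t := by
    field_simp; rw [← sq_abs k]; ring
  linarith [div_nonneg (sq_nonneg (c - t * |k| / 2)) ht.le]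

noncomputable def heatTransform (t : ℝ) (f : ℝ → ℝ) : ℝ := ∫ k, exp (-(k ^ 2 * t) / 2) * f k

section HeatTransform

variable {f g : ℝ → ℝ} {t : ℝ}

lemma ExpBounded.integrable_heat (hf : ExpBounded f) (hf_meas : AEStronglyMeasurable f)
    (ht : 0 < t) : Integrable fun k => exp (-(k ^ 2 * t) / 2) * f k := by
  obtain ⟨C, c, hC⟩ := hf
  refine ((integrable_exp_neg_sq_mul_exp_abs ht c).const_mul C).mono' (by fun_prop)
    (ae_of_all _ fun k => ?_)
  rw [norm_mul, norm_of_nonneg (exp_pos _).le, Real.norm_eq_abs, mul_left_comm]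
  exact mul_le_mul_of_nonneg_left (hC k) (exp_pos _).le

lemma heatTransform_mul_sub_mul (hf : Integrable fun k => exp (-(k ^ 2 * t) / 2) * f k)
    (hg : Integrable fun k => exp (-(k ^ 2 * t) / 2) * g k) (a b : ℝ) :
    heatTransform t (fun k => a * f k - b * g k)
      = a * heatTransform t f - b * heatTransform t g := by
  rw [heatTransform, heatTransform, heatTransform, ← integral_const_mul, ← integral_const_mul,
    ← integral_sub (hf.const_mul a) (hg.const_mul b)]
  congr with k; ring

lemma hasDerivAt_heatTransform_time (hf : ExpBounded f) (hf_meas : AEStronglyMeasurable f)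
    (ht : 0 < t) :
    HasDerivAt (fun s => heatTransform s f) (heatTransform t fun k => -(k ^ 2) / 2 * f k) t := by
  obtain ⟨C, c, hC⟩ := hf
  have hderiv (k s : ℝ) : HasDerivAt (fun s => exp (-(k ^ 2 * s) / 2) * f k)
      (exp (-(k ^ 2 * s) / 2) * (-(k ^ 2) / 2 * f k)) s := by
    have hlin : HasDerivAt (fun s => -(k ^ 2 * s) / 2) (-(k ^ 2) / 2) s :=
      (((hasDerivAt_id' s).const_mul (k ^ 2)).neg.div_const 2).congr_deriv (by ring)
    exact (hlin.exp.mul_const (f k)).congr_deriv (by ring)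
  have hbound (k s : ℝ) (hs : s ∈ Metric.ball t (t / 2)) :
      ‖exp (-(k ^ 2 * s) / 2) * (-(k ^ 2) / 2 * f k)‖
        ≤ C * (exp (-(k ^ 2 * (t / 2)) / 2) * exp ((c + 1) * |k|)) := by
    rw [Metric.mem_ball, Real.dist_eq, abs_lt] at hs
    have hk : k ^ 2 / 2 ≤ exp |k| := by
      simpa [sq_abs] using pow_div_factorial_le_exp _ (abs_nonneg k) 2
    have hgauss : exp (-(k ^ 2 * s) / 2) ≤ exp (-(k ^ 2 * (t / 2)) / 2) := by
      gcongr; linarith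
    rw [norm_mul, norm_mul, norm_of_nonneg (exp_pos _).le, Real.norm_eq_abs, Real.norm_eq_abs,
      abs_div, abs_neg, abs_of_nonneg (sq_nonneg k), abs_two, add_mul, one_mul, exp_add]
    calc exp (-(k ^ 2 * s) / 2) * (k ^ 2 / 2 * |f k|)
        ≤ exp (-(k ^ 2 * (t / 2)) / 2) * (exp |k| * (C * exp (c * |k|))) := by
          gcongr; exact hC k
      _ = C * (exp (-(k ^ 2 * (t / 2)) / 2) * (exp (c * |k|) * exp |k|)) := by ring
  exact (hasDerivAt_integral_of_dominated_loc_of_deriv_le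
    (Metric.ball_mem_nhds t (half_pos ht)) (Eventually.of_forall fun _ => by fun_prop)
    (ExpBounded.integrable_heat ⟨C, c, hC⟩ hf_meas ht) (by fun_prop)
    (ae_of_all _ hbound) ((integrable_exp_neg_sq_mul_exp_abs (half_pos ht) _).const_mul C)
    (ae_of_all _ fun k s _ => hderiv k s)).2

lemma hasDerivAt_heatTransform_mul {ψ ψ' : ℝ → ℝ → ℝ} {w : ℝ → ℝ} {x B₀ B : ℝ}
    (hw : ExpBounded w) (hw_meas : AEStronglyMeasurable w) (ht : 0 < t)
    (hψ_meas : ∀ r, AEStronglyMeasurable (ψ r)) (hψ'_meas : AEStronglyMeasurable (ψ' x))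
    (hψ : ∀ k, |ψ x k| ≤ B₀) (hψ' : ∀ᶠ r in 𝓝 x, ∀ k, |ψ' r k| ≤ B)
    (hderiv : ∀ᶠ r in 𝓝 x, ∀ k, HasDerivAt (ψ · k) (ψ' r k) r) :
    HasDerivAt (fun r => heatTransform t fun k => ψ r k * w k)
      (heatTransform t fun k => ψ' x k * w k) x := by
  obtain ⟨s, hs, hs_sub⟩ := (hψ'.and hderiv).exists_mem
  obtain ⟨C, c, hC⟩ := hw
  refine (hasDerivAt_integral_of_dominated_loc_of_deriv_le hs
    (Eventually.of_forall fun r => by fun_prop)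
    ((ExpBounded.mul_of_abs_le ⟨C, c, hC⟩ hψ).integrable_heat ((hψ_meas x).mul hw_meas) ht)
    (by fun_prop) (ae_of_all _ fun k r hr => ?_)
    ((integrable_exp_neg_sq_mul_exp_abs ht c).const_mul (B * C))
    (ae_of_all _ fun k r hr => ((hs_sub r hr).2 k).mul_const (w k) |>.const_mul _)).2
  rw [norm_mul, norm_mul, norm_of_nonneg (exp_pos _).le, Real.norm_eq_abs, Real.norm_eq_abs]
  calc exp (-(k ^ 2 * t) / 2) * (|ψ' r k| * |w k|)
      ≤ exp (-(k ^ 2 * t) / 2) * (B * (C * exp (c * |k|))) := by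
        gcongr
        · exact (abs_nonneg _).trans ((hs_sub r hr).1 k)
        · exact (hs_sub r hr).1 k
        · exact hC k
    _ = B * C * (exp (-(k ^ 2 * t) / 2) * exp (c * |k|)) := by ring

end HeatTransform

noncomputable def spectralWeight (ξ y k : ℝ) : ℝ :=
  eigenfunction ξ k y * (ξ * k * sinh (π * ξ * k))

lemma Qxi_eq_heatTransform (ξ t y x : ℝ) :
    Qxi ξ t y x
      = 1 / π ^ 2 * heatTransform t fun k => eigenfunction ξ k x * spectralWeight ξ y k := by
  rw [Qxi, heatTransform]
  congr with k
  simp only [eigenfunction, spectralWeight]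
  ring

lemma continuous_spectralWeight (ξ y : ℝ) : Continuous (spectralWeight ξ y) :=
  (continuous_eigenfunction ξ y).mul (by fun_prop)

lemma expBounded_spectralWeight {ξ : ℝ} (hξ : 0 < ξ) (y : ℝ) :
    ExpBounded (spectralWeight ξ y) := by
  refine ExpBounded.mul_of_abs_le ⟨ξ, π * ξ + 1, fun k => ?_⟩ (abs_eigenfunction_le · y)
  have hk : |k| ≤ exp |k| := by linarith [add_one_le_exp |k|]
  have hs := abs_sinh_le_exp_abs (π * ξ * k)
  rw [abs_mul, abs_mul, abs_of_pos pi_pos, abs_of_pos hξ] at hs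
  rw [abs_mul, abs_mul, abs_of_pos hξ, add_mul, one_mul, exp_add, mul_assoc]
  exact mul_le_mul_of_nonneg_left
    ((mul_le_mul hk hs (abs_nonneg _) (exp_pos _).le).trans_eq (mul_comm _ _)) hξ.le

section HeatTransformEigenfunction

variable {ξ t : ℝ} {w : ℝ → ℝ}

lemma hasDerivAt_heatTransform_eigenfunction (hξ : 0 < ξ) (ht : 0 < t) (hw : ExpBounded w)
    (hw_meas : AEStronglyMeasurable w) (x : ℝ) :
    HasDerivAt (fun r => heatTransform t fun k => eigenfunction ξ k r * w k)
      (heatTransform t fun k => eigenfunctionDeriv ξ k x * w k) x :=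
  hasDerivAt_heatTransform_mul hw hw_meas ht
    (fun r => (continuous_eigenfunction ξ r).aestronglyMeasurable)
    (continuous_eigenfunctionDeriv ξ x).aestronglyMeasurable (abs_eigenfunction_le · x)
    (eventually_forall_abs_le_of_continuousAt (by fun_prop)
      fun r k => abs_eigenfunctionDeriv_le k hξ r)
    (Eventually.of_forall fun r k => hasDerivAt_eigenfunction ξ k r)

lemma hasDerivAt_heatTransform_eigenfunctionDeriv (hξ : 0 < ξ) (ht : 0 < t)
    (hw : ExpBounded w) (hw_meas : AEStronglyMeasurable w) (x : ℝ) :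
    HasDerivAt (fun r => heatTransform t fun k => eigenfunctionDeriv ξ k r * w k)
      (heatTransform t fun k => eigenfunctionDeriv2 ξ k x * w k) x :=
  hasDerivAt_heatTransform_mul hw hw_meas ht
    (fun r => (continuous_eigenfunctionDeriv ξ r).aestronglyMeasurable)
    (continuous_eigenfunctionDeriv2 ξ x).aestronglyMeasurable (abs_eigenfunctionDeriv_le · hξ x)
    (eventually_forall_abs_le_of_continuousAt (by fun_prop)
      fun r k => abs_eigenfunctionDeriv2_le k hξ r)
    (Eventually.of_forall fun r k => hasDerivAt_eigenfunctionDeriv ξ k r)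

lemma heatTransform_neg_sq_mul_eigenfunction (hξ : 0 < ξ) (ht : 0 < t) (hw : ExpBounded w)
    (hw_meas : AEStronglyMeasurable w) (x : ℝ) :
    heatTransform t (fun k => -(k ^ 2) / 2 * (eigenfunction ξ k x * w k))
      = 1 / 2 * heatTransform t (fun k => eigenfunctionDeriv2 ξ k x * w k)
        - 1 / (2 * ξ ^ 2) * exp (-(2 * x / ξ))
          * heatTransform t (fun k => eigenfunction ξ k x * w k) := by
  rw [← heatTransform_mul_sub_mul
    ((hw.mul_of_abs_le (abs_eigenfunctionDeriv2_le · hξ x)).integrable_heat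
      ((continuous_eigenfunctionDeriv2 ξ x).aestronglyMeasurable.mul hw_meas) ht)
    ((hw.mul_of_abs_le (abs_eigenfunction_le · x)).integrable_heat
      ((continuous_eigenfunction ξ x).aestronglyMeasurable.mul hw_meas) ht)]
  congr with k
  linear_combination -w k * eigenfunction_eigenvalue_eq k hξ.ne' x

end HeatTransformEigenfunction

/-- Backward Kolmogorov equation for the killing Brownian motion:
`∂Q_ξ/∂t = (1/2) ∂²Q_ξ/∂x² - (1/(2ξ²)) e^{-2x/ξ} Q_ξ`. -/
theorem Qxi_backward_kolmogorov (ξ : ℝ) (hξ : 0 < ξ) (y : ℝ) (t : ℝ) (ht : 0 < t) (x : ℝ) :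
    deriv (fun s => Qxi ξ s y x) t
      = (1 / 2) * deriv (deriv (fun r => Qxi ξ t y r)) x
        - (1 / (2 * ξ ^ 2)) * Real.exp (-(2 * x / ξ)) * Qxi ξ t y x := by
  have hw := expBounded_spectralWeight hξ y
  have hw_meas : AEStronglyMeasurable (spectralWeight ξ y) :=
    (continuous_spectralWeight ξ y).aestronglyMeasurable
  have hdt := (hasDerivAt_heatTransform_time (hw.mul_of_abs_le (abs_eigenfunction_le · x))
    ((continuous_eigenfunction ξ x).aestronglyMeasurable.mul hw_meas) ht).const_mul (1 / π ^ 2)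
  have hdx (r : ℝ) :=
    (hasDerivAt_heatTransform_eigenfunction hξ ht hw hw_meas r).const_mul (1 / π ^ 2)
  have hdxx :=
    (hasDerivAt_heatTransform_eigenfunctionDeriv hξ ht hw hw_meas x).const_mul (1 / π ^ 2)
  simp only [Qxi_eq_heatTransform]
  rw [hdt.deriv, funext fun r => (hdx r).deriv, hdxx.deriv,
    heatTransform_neg_sq_mul_eigenfunction hξ ht hw hw_meas x]
  ring
end

section
/- For every t > 0 and every x > 0, y > 0, lim_{ξ→0⁺} Q_ξ(t,y|x) = (2πt)^{−1/2}·(e^{−(x−y)²/(2t)} − e^{−(x+y)²/(2t)}), the transition density of one-dimensional Brownian motion absorbed at the origin. -/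
open MeasureTheory Filter Topology

/-!
Substituting `u = s / ξ` gives `ξ K_{iξk}(e^{-x/ξ}) = ∫_0^∞ w_ξ(x, s) cos (k s) ds` with the
weight `w_ξ(x, s) = exp (-e^{-x/ξ} cosh (s/ξ))`. Since
`e^{-x/ξ} cosh (s/ξ) = (e^{(s-x)/ξ} + e^{-(s+x)/ξ}) / 2`, the weight tends to the indicator of
`s < x`, so `ξ K_{iξk}(e^{-x/ξ}) → sin (k x) / k`; together with `sinh (π ξ k) / ξ → π k` the
integrand of `Q_ξ` tends to `π e^{-k²t/2} sin (k x) sin (k y)`. For `ξ ≤ 1` the bounds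
`w_ξ(x, s) ≤ e^{(x-s)/2}`, `|sinh w| ≤ |w| e^{|w|}` and `π |k| - t k² / 2 ≤ π² / t - t k² / 4`
dominate the integrand by a multiple of `k² e^{-t k²/4}`, so dominated convergence applies; the
limit is a Gaussian cosine transform, evaluated via `2 sin a sin b = cos (a - b) - cos (a + b)`.
-/

open Real Set

lemma integrableOn_exp_neg_mul_cosh {z : ℝ} (hz : 0 < z) :
    IntegrableOn (fun u => exp (-(z * cosh u))) (Ioi 0) := by
  refine (exp_neg_integrableOn_Ioi 0 hz).mono' (by fun_prop) ?_
  filter_upwards [ae_restrict_mem measurableSet_Ioi] with u (hu : 0 < u)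
  have hu_le : u ≤ cosh u := (self_le_sinh_iff.2 hu.le).trans (sinh_lt_cosh u).le
  rw [norm_of_nonneg (exp_pos _).le, exp_le_exp]
  nlinarith

lemma continuous_Kik {z : ℝ} (hz : 0 < z) : Continuous fun k => Kik k z := by
  refine continuous_of_dominated (fun _ => by fun_prop) (fun k => ?_)
    (integrableOn_exp_neg_mul_cosh hz) (.of_forall fun u => by fun_prop)
  refine .of_forall fun u => ?_
  rw [norm_mul, norm_of_nonneg (exp_pos _).le]
  exact mul_le_of_le_one_right (exp_pos _).le (abs_cos_le_one _)

lemma mul_Kik_mul_eq_integral {ξ : ℝ} (hξ : 0 < ξ) (k z : ℝ) :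
    ξ * Kik (ξ * k) z = ∫ s in Ioi 0, exp (-(z * cosh (s / ξ))) * cos (k * s) := by
  have h := integral_comp_mul_left_Ioi
    (fun u => exp (-(z * cosh u)) * cos (ξ * k * u)) 0 (inv_pos.2 hξ)
  simp only [mul_zero, inv_inv, smul_eq_mul] at h
  rw [Kik, ← h]
  refine setIntegral_congr_fun measurableSet_Ioi fun s _ => ?_
  rw [inv_mul_eq_div, show ξ * k * (s / ξ) = k * s by field_simp]

noncomputable def killingWeight (ξ x s : ℝ) : ℝ := exp (-(exp (-(x / ξ)) * cosh (s / ξ)))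

lemma mul_Kik_eq_integral_killingWeight {ξ : ℝ} (hξ : 0 < ξ) (k x : ℝ) :
    ξ * Kik (ξ * k) (exp (-(x / ξ))) = ∫ s in Ioi 0, killingWeight ξ x s * cos (k * s) :=
  mul_Kik_mul_eq_integral hξ k _

lemma exp_neg_div_mul_cosh_div (ξ x s : ℝ) :
    exp (-(x / ξ)) * cosh (s / ξ) = (exp ((s - x) / ξ) + exp (-((s + x) / ξ))) / 2 := by
  rw [cosh_eq, mul_div_assoc', mul_add, ← exp_add, ← exp_add]
  congr 3 <;> ring

lemma killingWeight_le_exp {ξ : ℝ} (hξ : 0 < ξ) (hξ1 : ξ ≤ 1) (x s : ℝ) :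
    killingWeight ξ x s ≤ exp ((x - s) / 2) := by
  rw [killingWeight, exp_le_exp]
  have hpos : 0 < exp (-(x / ξ)) * cosh (s / ξ) := mul_pos (exp_pos _) (cosh_pos _)
  rcases le_or_gt s x with hsx | hsx
  · linarith [div_nonneg (sub_nonneg.2 hsx) zero_le_two]
  · have hdiv : s - x ≤ (s - x) / ξ := le_div_self (by linarith) hξ hξ1
    rw [exp_neg_div_mul_cosh_div]
    linarith [add_one_le_exp ((s - x) / ξ), exp_pos (-((s + x) / ξ))]

lemma integrableOn_exp_sub_div_two (x : ℝ) :
    IntegrableOn (fun s => exp ((x - s) / 2)) (Ioi 0) := by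
  refine IntegrableOn.congr_fun ((exp_neg_integrableOn_Ioi 0 one_half_pos).const_mul
    (exp (x / 2))) (fun s _ => ?_) measurableSet_Ioi
  rw [← exp_add]
  ring_nf

lemma integral_exp_sub_div_two (x : ℝ) : ∫ s in Ioi 0, exp ((x - s) / 2) = 2 * exp (x / 2) := by
  have h := integral_exp_mul_Ioi (neg_lt_zero.2 one_half_pos) 0
  rw [mul_zero, exp_zero] at h
  calc ∫ s in Ioi 0, exp ((x - s) / 2) = exp (x / 2) * ∫ s in Ioi 0, exp (-(1 / 2) * s) := by
        rw [← integral_const_mul]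
        congr with s
        rw [← exp_add]
        ring_nf
    _ = 2 * exp (x / 2) := by rw [h]; ring

lemma norm_killingWeight_mul_cos_le {ξ : ℝ} (hξ : 0 < ξ) (hξ1 : ξ ≤ 1) (x k s : ℝ) :
    ‖killingWeight ξ x s * cos (k * s)‖ ≤ exp ((x - s) / 2) := by
  rw [norm_mul, killingWeight, norm_of_nonneg (exp_pos _).le]
  exact (mul_le_of_le_one_right (exp_pos _).le (abs_cos_le_one _)).trans
    (killingWeight_le_exp hξ hξ1 x s)

lemma norm_mul_Kik_le {ξ : ℝ} (hξ : 0 < ξ) (hξ1 : ξ ≤ 1) (k x : ℝ) :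
    ‖ξ * Kik (ξ * k) (exp (-(x / ξ)))‖ ≤ 2 * exp (x / 2) := by
  rw [mul_Kik_eq_integral_killingWeight hξ, ← integral_exp_sub_div_two]
  exact norm_integral_le_of_norm_le (integrableOn_exp_sub_div_two x)
    (.of_forall (norm_killingWeight_mul_cos_le hξ hξ1 x k))

lemma tendsto_div_nhdsGT_zero_atTop {c : ℝ} (hc : 0 < c) :
    Tendsto (fun ξ => c / ξ) (𝓝[>] 0) atTop := by
  simpa only [div_eq_mul_inv] using tendsto_inv_nhdsGT_zero.const_mul_atTop hc

lemma tendsto_killingWeight_of_mem_Ioo {x s : ℝ} (hs : s ∈ Ioo (-x) x) :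
    Tendsto (fun ξ => killingWeight ξ x s) (𝓝[>] 0) (𝓝 1) := by
  have h₁ : Tendsto (fun ξ => exp ((s - x) / ξ)) (𝓝[>] 0) (𝓝 0) := by
    have h : Tendsto (fun ξ => (s - x) / ξ) (𝓝[>] 0) atBot := by
      simpa only [div_eq_mul_inv] using
        tendsto_inv_nhdsGT_zero.const_mul_atTop_of_neg (sub_neg.2 hs.2)
    exact tendsto_exp_atBot.comp h
  have h₂ : Tendsto (fun ξ => exp (-((s + x) / ξ))) (𝓝[>] 0) (𝓝 0) :=
    tendsto_exp_atBot.comp <| tendsto_neg_atTop_atBot.comp <|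
      tendsto_div_nhdsGT_zero_atTop (neg_lt_iff_pos_add.1 hs.1)
  have h : Tendsto (fun ξ => exp (-(x / ξ)) * cosh (s / ξ)) (𝓝[>] 0) (𝓝 0) := by
    simpa only [exp_neg_div_mul_cosh_div, add_zero, zero_div] using (h₁.add h₂).div_const 2
  simpa only [killingWeight, Function.comp_def, neg_zero, exp_zero] using
    (continuous_exp.tendsto _).comp h.neg

lemma tendsto_killingWeight_of_lt {x s : ℝ} (hxs : x < s) :
    Tendsto (fun ξ => killingWeight ξ x s) (𝓝[>] 0) (𝓝 0) := by
  have h : Tendsto (fun ξ => exp (-(x / ξ)) * cosh (s / ξ)) (𝓝[>] 0) atTop := by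
    have h₁ : Tendsto (fun ξ => exp ((s - x) / ξ) / 2) (𝓝[>] 0) atTop :=
      (tendsto_exp_atTop.comp (tendsto_div_nhdsGT_zero_atTop (sub_pos.2 hxs))).atTop_div_const
        two_pos
    refine tendsto_atTop_mono (fun ξ => ?_) h₁
    rw [exp_neg_div_mul_cosh_div]
    linarith [exp_pos (-((s + x) / ξ))]
  exact tendsto_exp_atBot.comp (tendsto_neg_atTop_atBot.comp h)

lemma tendsto_mul_Kik {x : ℝ} (hx : 0 < x) (k : ℝ) :
    Tendsto (fun ξ => ξ * Kik (ξ * k) (exp (-(x / ξ)))) (𝓝[>] 0)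
      (𝓝 (∫ s in 0..x, cos (k * s))) := by
  have hlim : ∫ s in 0..x, cos (k * s) =
      ∫ s in Ioi 0, (Iio x).indicator (fun s => cos (k * s)) s := by
    rw [setIntegral_indicator measurableSet_Iio, Ioi_inter_Iio,
      intervalIntegral.integral_of_le hx.le, integral_Ioc_eq_integral_Ioo]
  rw [hlim]
  refine (tendsto_integral_filter_of_dominated_convergence (fun s => exp ((x - s) / 2))
    (.of_forall fun ξ => by simp only [killingWeight]; fun_prop) ?_
    (integrableOn_exp_sub_div_two x) ?_).congr'
    (eventually_nhdsWithin_of_forall fun ξ hξ => (mul_Kik_eq_integral_killingWeight hξ k x).symm)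
  · filter_upwards [Ioo_mem_nhdsGT one_pos] with ξ hξ
    exact .of_forall (norm_killingWeight_mul_cos_le hξ.1 hξ.2.le x k)
  · filter_upwards [ae_restrict_mem measurableSet_Ioi,
      ae_restrict_of_ae (Measure.ae_ne volume x)] with s (hs : 0 < s) hsx
    rcases hsx.lt_or_gt with hsx | hsx
    · rw [indicator_of_mem (mem_Iio.2 hsx)]
      simpa only [one_mul] using
        (tendsto_killingWeight_of_mem_Ioo ⟨by linarith, hsx⟩).mul_const (cos (k * s))
    · rw [indicator_of_notMem (notMem_Iio.2 hsx.le)]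
      simpa only [zero_mul] using (tendsto_killingWeight_of_lt hsx).mul_const (cos (k * s))

lemma abs_sinh_le_mul_exp_abs (w : ℝ) : |sinh w| ≤ |w| * exp |w| := by
  rw [abs_sinh, sinh_eq]
  have hsplit : exp (-|w|) = exp |w| * exp (-(2 * |w|)) := by rw [← exp_add]; ring_nf
  nlinarith [add_one_le_exp (-(2 * |w|)), exp_pos |w|]

lemma tendsto_sinh_mul_div (c : ℝ) : Tendsto (fun ξ => sinh (c * ξ) / ξ) (𝓝[>] 0) (𝓝 c) := by
  simpa [div_eq_inv_mul] using ((hasDerivAt_sinh (c * 0)).comp 0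
    ((hasDerivAt_id (0 : ℝ)).const_mul c)).tendsto_slope_zero_right

lemma re_cexp_neg_mul_sq_add_mul_I (b c k : ℝ) :
    RCLike.re (Complex.exp (-b * k ^ 2 + c * Complex.I * k + 0)) =
      exp (-b * k ^ 2) * cos (c * k) := by
  rw [RCLike.re_to_complex, Complex.exp_re]
  simp [Complex.mul_re, Complex.mul_im, pow_two]

lemma integrable_exp_neg_mul_sq_mul_cos {b : ℝ} (hb : 0 < b) (c : ℝ) :
    Integrable fun k => exp (-b * k ^ 2) * cos (c * k) := by
  simpa only [re_cexp_neg_mul_sq_add_mul_I] using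
    (integrable_cexp_quadratic (b := b) (by simpa using hb) (c * Complex.I) 0).re

lemma integral_exp_neg_mul_sq_mul_cos {b : ℝ} (hb : 0 < b) (c : ℝ) :
    ∫ k, exp (-b * k ^ 2) * cos (c * k) = sqrt (π / b) * exp (-c ^ 2 / (4 * b)) := by
  have hsqrt : ((π : ℂ) / -(-b)) ^ (1 / 2 : ℂ) = ((sqrt (π / b) : ℝ) : ℂ) := by
    rw [neg_neg, sqrt_eq_rpow, Complex.ofReal_cpow (div_pos pi_pos hb).le]
    push_cast
    rfl
  have hexp : (0 : ℂ) - (c * Complex.I) ^ 2 / (4 * -b) = ((-c ^ 2 / (4 * b) : ℝ) : ℂ) := by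
    push_cast
    rw [mul_pow, Complex.I_sq]
    field_simp
    ring
  simp_rw [← re_cexp_neg_mul_sq_add_mul_I]
  rw [integral_re (integrable_cexp_quadratic (b := b) (by simpa using hb) _ 0),
    integral_cexp_quadratic (b := -b) (by simpa using hb), hsqrt, hexp, ← Complex.ofReal_exp,
    ← Complex.ofReal_mul, RCLike.re_to_complex, Complex.ofReal_re]

lemma integral_exp_neg_mul_sq_mul_sin_mul_sin {b : ℝ} (hb : 0 < b) (x y : ℝ) :
    ∫ k, exp (-b * k ^ 2) * (sin (k * x) * sin (k * y)) =
      sqrt (π / b) / 2 * (exp (-(x - y) ^ 2 / (4 * b)) - exp (-(x + y) ^ 2 / (4 * b))) := by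
  have hprod (k : ℝ) : exp (-b * k ^ 2) * (sin (k * x) * sin (k * y)) =
      (exp (-b * k ^ 2) * cos ((x - y) * k) - exp (-b * k ^ 2) * cos ((x + y) * k)) / 2 := by
    rw [sub_mul, add_mul, mul_comm x, mul_comm y, cos_sub, cos_add]
    ring
  simp_rw [hprod]
  rw [integral_div, integral_sub (integrable_exp_neg_mul_sq_mul_cos hb _)
    (integrable_exp_neg_mul_sq_mul_cos hb _), integral_exp_neg_mul_sq_mul_cos hb,
    integral_exp_neg_mul_sq_mul_cos hb]
  ring

lemma integral_exp_neg_sq_mul_sin_mul_sin {t : ℝ} (ht : 0 < t) (x y : ℝ) :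
    ∫ k, exp (-(k ^ 2 * t) / 2) * (sin (k * x) * sin (k * y)) =
      π * ((sqrt (2 * π * t))⁻¹ *
        (exp (-(x - y) ^ 2 / (2 * t)) - exp (-(x + y) ^ 2 / (2 * t)))) := by
  have hgauss (k : ℝ) : -(k ^ 2 * t) / 2 = -(t / 2) * k ^ 2 := by ring
  have hsqrt : sqrt (π / (t / 2)) = sqrt (2 * π * t) / t := by
    rw [show π / (t / 2) = 2 * π * t / t ^ 2 by field_simp, sqrt_div' _ (sq_nonneg t),
      sqrt_sq ht.le]
  simp_rw [hgauss]
  rw [integral_exp_neg_mul_sq_mul_sin_mul_sin (half_pos ht), hsqrt,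
    show 4 * (t / 2) = 2 * t by ring]
  field_simp
  rw [sq_sqrt (by positivity)]

noncomputable def qxiIntegrand (ξ t y x k : ℝ) : ℝ :=
  exp (-(k ^ 2 * t) / 2) * Kik (ξ * k) (exp (-(x / ξ))) * Kik (ξ * k) (exp (-(y / ξ)))
    * (ξ * k * sinh (π * ξ * k))

lemma Qxi_eq_integral_qxiIntegrand (ξ t y x : ℝ) :
    Qxi ξ t y x = 1 / π ^ 2 * ∫ k, qxiIntegrand ξ t y x k :=
  rfl

lemma continuous_qxiIntegrand (ξ t y x : ℝ) : Continuous (qxiIntegrand ξ t y x) := by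
  have hK (z : ℝ) : Continuous fun k => Kik (ξ * k) (exp z) :=
    (continuous_Kik (exp_pos z)).comp (continuous_const_mul ξ)
  unfold qxiIntegrand
  fun_prop

lemma tendsto_qxiIntegrand {x y : ℝ} (hx : 0 < x) (hy : 0 < y) (t : ℝ) {k : ℝ} (hk : k ≠ 0) :
    Tendsto (fun ξ => qxiIntegrand ξ t y x k) (𝓝[>] 0)
      (𝓝 (π * (exp (-(k ^ 2 * t) / 2) * (sin (k * x) * sin (k * y))))) := by
  have hcos (a : ℝ) : ∫ s in 0..a, cos (k * s) = sin (k * a) / k := by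
    rw [intervalIntegral.integral_comp_mul_left (fun s => cos s) hk, integral_cos]
    simp [div_eq_inv_mul]
  have hsinh : Tendsto (fun ξ => sinh (π * ξ * k) / ξ) (𝓝[>] 0) (𝓝 (π * k)) := by
    simpa only [mul_right_comm π] using tendsto_sinh_mul_div (π * k)
  have hlim := ((tendsto_mul_Kik hx k).mul (tendsto_mul_Kik hy k)).mul (hsinh.const_mul k)
  rw [hcos, hcos] at hlim
  convert (hlim.const_mul (exp (-(k ^ 2 * t) / 2))).congr' ?_ using 2
  · field_simp
  · filter_upwards [self_mem_nhdsWithin] with ξ (hξ : 0 < ξ)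
    rw [qxiIntegrand]
    field_simp

lemma abs_mul_sinh_le {ξ : ℝ} (hξ : 0 ≤ ξ) (hξ1 : ξ ≤ 1) (k : ℝ) :
    |ξ * k * sinh (π * ξ * k)| ≤ ξ ^ 2 * (π * k ^ 2 * exp (π * |k|)) := by
  have habs : |π * ξ * k| = π * ξ * |k| := by
    rw [abs_mul, abs_mul, abs_of_pos pi_pos, abs_of_nonneg hξ]
  have hexp : exp (π * ξ * |k|) ≤ exp (π * |k|) := by
    rw [exp_le_exp, mul_right_comm]
    exact mul_le_of_le_one_right (by positivity) hξ1
  calc |ξ * k * sinh (π * ξ * k)|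
      = ξ * |k| * |sinh (π * ξ * k)| := by rw [abs_mul, abs_mul, abs_of_nonneg hξ]
    _ ≤ ξ * |k| * (π * ξ * |k| * exp (π * |k|)) := by
        gcongr
        exact (abs_sinh_le_mul_exp_abs _).trans (by rw [habs]; gcongr)
    _ = ξ ^ 2 * (π * k ^ 2 * exp (π * |k|)) := by rw [← sq_abs k]; ring

lemma exp_neg_sq_mul_exp_mul_abs_le {t : ℝ} (ht : 0 < t) (a k : ℝ) :
    exp (-(k ^ 2 * t) / 2) * exp (a * |k|) ≤ exp (a ^ 2 / t) * exp (-(t / 4) * k ^ 2) := by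
  rw [← exp_add, ← exp_add, exp_le_exp]
  have hamgm : a * |k| ≤ a ^ 2 / t + t / 4 * k ^ 2 := by
    rw [← sq_abs k, div_add' _ _ _ ht.ne', le_div_iff₀ ht]
    nlinarith [sq_nonneg (t * |k| - 2 * a)]
  linarith

lemma norm_qxiIntegrand_le {t ξ : ℝ} (ht : 0 < t) (hξ : 0 < ξ) (hξ1 : ξ ≤ 1) (x y k : ℝ) :
    ‖qxiIntegrand ξ t y x k‖ ≤
      4 * π * exp ((x + y) / 2 + π ^ 2 / t) * (k ^ 2 * exp (-(t / 4) * k ^ 2)) := by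
  set A := Kik (ξ * k) (exp (-(x / ξ)))
  set B := Kik (ξ * k) (exp (-(y / ξ)))
  have hA : ξ * |A| ≤ 2 * exp (x / 2) := by
    simpa only [norm_mul, norm_of_nonneg hξ.le, norm_eq_abs] using norm_mul_Kik_le hξ hξ1 k x
  have hB : ξ * |B| ≤ 2 * exp (y / 2) := by
    simpa only [norm_mul, norm_of_nonneg hξ.le, norm_eq_abs] using norm_mul_Kik_le hξ hξ1 k y
  calc ‖qxiIntegrand ξ t y x k‖
      = exp (-(k ^ 2 * t) / 2) * |A| * |B| * |ξ * k * sinh (π * ξ * k)| := by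
        rw [qxiIntegrand, norm_mul, norm_mul, norm_mul, norm_of_nonneg (exp_pos _).le]
        rfl
    _ ≤ exp (-(k ^ 2 * t) / 2) * |A| * |B| * (ξ ^ 2 * (π * k ^ 2 * exp (π * |k|))) := by
        gcongr
        exact abs_mul_sinh_le hξ.le hξ1 k
    _ = (ξ * |A|) * (ξ * |B|) * π * k ^ 2 * (exp (-(k ^ 2 * t) / 2) * exp (π * |k|)) := by ring
    _ ≤ 2 * exp (x / 2) * (2 * exp (y / 2)) * π * k ^ 2 *
          (exp (π ^ 2 / t) * exp (-(t / 4) * k ^ 2)) := by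
        grw [hA, hB, exp_neg_sq_mul_exp_mul_abs_le ht]
    _ = _ := by rw [exp_add, add_div, exp_add]; ring

lemma integrable_sq_mul_exp_neg_mul_sq {b : ℝ} (hb : 0 < b) :
    Integrable fun k : ℝ => k ^ 2 * exp (-b * k ^ 2) := by
  simpa only [rpow_two] using integrable_rpow_mul_exp_neg_mul_sq hb (s := 2) (by norm_num)

lemma tendsto_integral_qxiIntegrand {t x y : ℝ} (ht : 0 < t) (hx : 0 < x) (hy : 0 < y) :
    Tendsto (fun ξ => ∫ k, qxiIntegrand ξ t y x k) (𝓝[>] 0)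
      (𝓝 (∫ k, π * (exp (-(k ^ 2 * t) / 2) * (sin (k * x) * sin (k * y))))) := by
  refine tendsto_integral_filter_of_dominated_convergence _
    (.of_forall fun ξ => (continuous_qxiIntegrand ξ t y x).aestronglyMeasurable) ?_
    ((integrable_sq_mul_exp_neg_mul_sq (by positivity : 0 < t / 4)).const_mul
      (4 * π * exp ((x + y) / 2 + π ^ 2 / t))) ?_
  · filter_upwards [Ioo_mem_nhdsGT one_pos] with ξ hξ
    exact .of_forall (norm_qxiIntegrand_le ht hξ.1 hξ.2.le x y)
  · filter_upwards [Measure.ae_ne volume 0] with k hk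
    exact tendsto_qxiIntegrand hx hy t hk

/-- As `ξ → 0⁺`, `Q_ξ(t,y|x)` converges to the transition density of Brownian motion
absorbed at the origin. -/
theorem Qxi_xi_to_zero_limit (t : ℝ) (ht : 0 < t) (x y : ℝ) (hx : 0 < x) (hy : 0 < y) :
    Tendsto (fun ξ : ℝ => Qxi ξ t y x) (𝓝[>] 0)
      (𝓝 ((Real.sqrt (2 * Real.pi * t))⁻¹ *
        (Real.exp (-(x - y) ^ 2 / (2 * t)) - Real.exp (-(x + y) ^ 2 / (2 * t))))) := by
  have hlim := (tendsto_integral_qxiIntegrand ht hx hy).const_mul (1 / π ^ 2)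
  rw [integral_const_mul, integral_exp_neg_sq_mul_sin_mul_sin ht] at hlim
  simp only [Qxi_eq_integral_qxiIntegrand]
  convert hlim using 2
  field_simp
end
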